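/- Let M be a symmetric positive definite 2×2 matrix, (e₀,e₁,e₂) a superbase of Z^2, and δᵢ := ⟨eᵢ, M eᵢ⟩. Then h(δ₀,δ₁,δ₂) ≥ det(M), with equality if and only if (e₀,e₁,e₂) is M-obtuse. -/

import Mathlib

/-
Write `σ₀ = -⟨e₁, M e₂⟩`, `σ₁ = -⟨e₀, M e₂⟩`, `σ₂ = -⟨e₀, M e₁⟩`. Pairing `e₀ + e₁ + e₂ = 0` with
each `eᵢ` gives `δ₀ = σ₁ + σ₂`, `δ₁ = σ₀ + σ₂`, `δ₂ = σ₀ + σ₁`, and the Gram determinant identity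
with `det(e₁, e₂)² = 1` gives `det M = σ₀σ₁ + σ₁σ₂ + σ₂σ₀`. In these coordinates every branch of `h`
equals `σ₀σ₁ + σ₁σ₂ + σ₂σ₀ + min(σ₀, σ₁, σ₂, 0)²`, so `h ≥ det M`, with equality iff all `σᵢ ≥ 0`,
i.e. iff the superbase is `M`-obtuse.
-/

def det2 (f g : ℤ × ℤ) : ℤ := f.1 * g.2 - f.2 * g.1

def qf (M : Matrix (Fin 2) (Fin 2) ℝ) (f g : ℤ × ℤ) : ℝ :=
  (f.1 : ℝ) * (M 0 0 * g.1 + M 0 1 * g.2) + (f.2 : ℝ) * (M 1 0 * g.1 + M 1 1 * g.2)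

def IsSuperbase (e₀ e₁ e₂ : ℤ × ℤ) : Prop := e₀ + e₁ + e₂ = 0 ∧ |det2 e₁ e₂| = 1

def IsObtuse (M : Matrix (Fin 2) (Fin 2) ℝ) (e₀ e₁ e₂ : ℤ × ℤ) : Prop :=
  qf M e₀ e₁ ≤ 0 ∧ qf M e₀ e₂ ≤ 0 ∧ qf M e₁ e₂ ≤ 0

noncomputable def hFun (a b c : ℝ) : ℝ :=
  if b + c ≤ a then b * c
  else if c + a ≤ b then c * a
  else if a + b ≤ c then a * b
  else (a * b + b * c + c * a) / 2 - (a ^ 2 + b ^ 2 + c ^ 2) / 4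

lemma qf_zero_right (M : Matrix (Fin 2) (Fin 2) ℝ) (f : ℤ × ℤ) : qf M f 0 = 0 := by
  simp [qf]

lemma qf_add_right (M : Matrix (Fin 2) (Fin 2) ℝ) (f g g' : ℤ × ℤ) :
    qf M f (g + g') = qf M f g + qf M f g' := by
  simp only [qf, Prod.fst_add, Prod.snd_add, Int.cast_add]
  ring

lemma qf_comm {M : Matrix (Fin 2) (Fin 2) ℝ} (hM : M.IsSymm) (f g : ℤ × ℤ) :
    qf M f g = qf M g f := by
  have hM₁₀ : M 1 0 = M 0 1 := hM.apply 0 1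
  simp only [qf, hM₁₀]
  ring

lemma qf_self_nonneg {M : Matrix (Fin 2) (Fin 2) ℝ} (hM : M.PosSemidef) (f : ℤ × ℤ) :
    0 ≤ qf M f f := by
  simpa [dotProduct, Matrix.mulVec, Fin.sum_univ_two, qf] using
    hM.dotProduct_mulVec_nonneg ![(f.1 : ℝ), (f.2 : ℝ)]

lemma qf_mul_qf_sub_sq {M : Matrix (Fin 2) (Fin 2) ℝ} (hM : M.IsSymm) (f g : ℤ × ℤ) :
    qf M f f * qf M g g - qf M f g ^ 2 = M.det * (det2 f g : ℝ) ^ 2 := by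
  have hM₁₀ : M 1 0 = M 0 1 := hM.apply 0 1
  simp only [qf, det2, Matrix.det_fin_two, hM₁₀, Int.cast_sub, Int.cast_mul]
  ring

lemma qf_add_add_right_eq_zero (M : Matrix (Fin 2) (Fin 2) ℝ) {e₀ e₁ e₂ : ℤ × ℤ}
    (h : e₀ + e₁ + e₂ = 0) (f : ℤ × ℤ) : qf M f e₀ + qf M f e₁ + qf M f e₂ = 0 := by
  rw [← qf_add_right, ← qf_add_right, h, qf_zero_right]

lemma qf_self_eq_of_add_eq_zero {M : Matrix (Fin 2) (Fin 2) ℝ} (hM : M.IsSymm)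
    {e₀ e₁ e₂ : ℤ × ℤ} (h : e₀ + e₁ + e₂ = 0) :
    qf M e₀ e₀ = -qf M e₀ e₂ + -qf M e₀ e₁ ∧
      qf M e₁ e₁ = -qf M e₁ e₂ + -qf M e₀ e₁ ∧
      qf M e₂ e₂ = -qf M e₁ e₂ + -qf M e₀ e₂ := by
  have h₀ := qf_add_add_right_eq_zero M h e₀
  have h₁ := qf_add_add_right_eq_zero M h e₁
  have h₂ := qf_add_add_right_eq_zero M h e₂
  rw [qf_comm hM e₁ e₀] at h₁
  rw [qf_comm hM e₂ e₀, qf_comm hM e₂ e₁] at h₂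
  exact ⟨by linarith, by linarith, by linarith⟩

lemma det_eq_of_isSuperbase {M : Matrix (Fin 2) (Fin 2) ℝ} (hM : M.IsSymm) {e₀ e₁ e₂ : ℤ × ℤ}
    (hsb : IsSuperbase e₀ e₁ e₂) :
    M.det = qf M e₁ e₂ * qf M e₀ e₂ + qf M e₀ e₂ * qf M e₀ e₁ + qf M e₀ e₁ * qf M e₁ e₂ := by
  obtain ⟨hsum, hunit⟩ := hsb
  obtain ⟨-, h₁, h₂⟩ := qf_self_eq_of_add_eq_zero hM hsum
  have hsq : (det2 e₁ e₂ : ℝ) ^ 2 = 1 := by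
    exact_mod_cast (by rw [← sq_abs, hunit, one_pow] : det2 e₁ e₂ ^ 2 = 1)
  have hgram := qf_mul_qf_sub_sq hM e₁ e₂
  rw [hsq, mul_one] at hgram
  rw [show qf M e₀ e₁ = -qf M e₁ e₁ - qf M e₁ e₂ by linarith,
    show qf M e₀ e₂ = -qf M e₁ e₂ - qf M e₂ e₂ by linarith]
  linear_combination -hgram

lemma hFun_eq_add_sq {a b c x y z : ℝ} (ha : a = y + z) (hb : b = x + z) (hc : c = x + y)
    (ha₀ : 0 ≤ a) (hb₀ : 0 ≤ b) (hc₀ : 0 ≤ c) :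
    hFun a b c = x * y + y * z + z * x + min (min (min x y) z) 0 ^ 2 := by
  subst ha hb hc
  unfold hFun
  split_ifs with h₁ h₂ h₃
  · have hm : min (min (min x y) z) 0 = x := by
      rw [min_eq_left (by linarith : x ≤ y), min_eq_left (by linarith : x ≤ z),
        min_eq_left (by linarith : x ≤ 0)]
    rw [hm]; ring
  · have hm : min (min (min x y) z) 0 = y := by
      rw [min_eq_right (by linarith : y ≤ x), min_eq_left (by linarith : y ≤ z),
        min_eq_left (by linarith : y ≤ 0)]
    rw [hm]; ring
  · have hm : min (min (min x y) z) 0 = z := by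
      rw [min_eq_right (show z ≤ min x y from le_min (by linarith) (by linarith)),
        min_eq_left (by linarith : z ≤ 0)]
    rw [hm]; ring
  · rw [min_eq_right (le_min (le_min (by linarith) (by linarith)) (by linarith))]
    ring

lemma le_hFun_and_hFun_eq_iff {a b c x y z : ℝ} (ha : a = y + z) (hb : b = x + z)
    (hc : c = x + y) (ha₀ : 0 ≤ a) (hb₀ : 0 ≤ b) (hc₀ : 0 ≤ c) :
    x * y + y * z + z * x ≤ hFun a b c ∧
      (hFun a b c = x * y + y * z + z * x ↔ 0 ≤ x ∧ 0 ≤ y ∧ 0 ≤ z) := by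
  rw [hFun_eq_add_sq ha hb hc ha₀ hb₀ hc₀, add_eq_left, sq_eq_zero_iff, min_eq_right_iff,
    le_min_iff, le_min_iff, and_assoc]
  exact ⟨le_add_of_nonneg_right (sq_nonneg _), Iff.rfl⟩

theorem stmt7_h_superbase_general (M : Matrix (Fin 2) (Fin 2) ℝ)
    (hpos : M.PosDef)
    (e₀ e₁ e₂ : ℤ × ℤ) (hsb : IsSuperbase e₀ e₁ e₂) :
    M.det ≤ hFun (qf M e₀ e₀) (qf M e₁ e₁) (qf M e₂ e₂) ∧
      (hFun (qf M e₀ e₀) (qf M e₁ e₁) (qf M e₂ e₂) = M.det ↔ IsObtuse M e₀ e₁ e₂) := by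
  have hM : M.IsSymm := Matrix.isHermitian_iff_isSymm.mp hpos.isHermitian
  obtain ⟨hδ₀, hδ₁, hδ₂⟩ := qf_self_eq_of_add_eq_zero hM hsb.1
  have key := le_hFun_and_hFun_eq_iff hδ₀ hδ₁ hδ₂ (qf_self_nonneg hpos.posSemidef e₀)
    (qf_self_nonneg hpos.posSemidef e₁) (qf_self_nonneg hpos.posSemidef e₂)
  simp only [neg_mul_neg, neg_nonneg] at key
  rw [det_eq_of_isSuperbase hM hsb, IsObtuse]
  exact ⟨key.1, key.2.trans (by tauto)⟩

/-- For a superbase and `δᵢ := ⟨eᵢ, M eᵢ⟩`, one has `h(δ₀,δ₁,δ₂) ≥ det M`, with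
equality iff the superbase is `M`-obtuse. -/
theorem stmt7_h_superbase (M : Matrix (Fin 2) (Fin 2) ℝ)
    (hsym : M.IsSymm) (hpos : M.PosDef)
    (e₀ e₁ e₂ : ℤ × ℤ) (hsb : IsSuperbase e₀ e₁ e₂) :
    M.det ≤ hFun (qf M e₀ e₀) (qf M e₁ e₁) (qf M e₂ e₂) ∧
      (hFun (qf M e₀ e₀) (qf M e₁ e₁) (qf M e₂ e₂) = M.det ↔ IsObtuse M e₀ e₁ e₂) :=
  stmt7_h_superbase_general M hpos e₀ e₁ e₂ hsb
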